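/- arXiv:2601.16187 — 7 statements merged into one kernel-verified Lean document; each statement's English description precedes it below -/
import Mathlib

section
/- Let P be a finite nonempty index set, f : P → ℝ with f_p ≥ 0, ∑_p f_p = r > 0, and ℓ : P → ℝ with ℓ_p > 0 whenever f_p > 0. With U^A = (∑_p f_p ℓ_p)/(r · min{ℓ_p : f_p > 0}) and U^L = max{ℓ_p : f_p > 0}/min{ℓ_p : f_p > 0}, exactly one of the following holds: either U^L > U^A > 1, or U^L = U^A = 1. In particular U^A = U^L if and only if all used paths have equal latency. -/
/-- Dichotomy between loaded and average unfairness. -/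
theorem stmt_1 {P : Type*} [Fintype P] [Nonempty P]
    (f ℓ : P → ℝ) (r : ℝ) (hr : 0 < r)
    (hf : ∀ p, 0 ≤ f p) (hsum : ∑ p, f p = r)
    (hℓ : ∀ p, 0 < f p → 0 < ℓ p)
    (S : Finset P) (hS : S = Finset.univ.filter fun p => 0 < f p)
    (hSne : S.Nonempty) :
    ((S.sup' hSne ℓ / S.inf' hSne ℓ > (∑ p, f p * ℓ p) / (r * S.inf' hSne ℓ) ∧
        (∑ p, f p * ℓ p) / (r * S.inf' hSne ℓ) > 1) ∨
      (S.sup' hSne ℓ / S.inf' hSne ℓ = (∑ p, f p * ℓ p) / (r * S.inf' hSne ℓ) ∧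
        (∑ p, f p * ℓ p) / (r * S.inf' hSne ℓ) = 1)) ∧
    ((∑ p, f p * ℓ p) / (r * S.inf' hSne ℓ) = S.sup' hSne ℓ / S.inf' hSne ℓ ↔
      ∀ p ∈ S, ∀ q ∈ S, ℓ p = ℓ q) := by
  set m := S.inf' hSne ℓ with hm
  set M := S.sup' hSne ℓ with hM
  have hmem : ∀ p, p ∈ S ↔ 0 < f p := by
    intro p; rw [hS]; simp
  have hmpos : 0 < m := by
    obtain ⟨p, hp, hpe⟩ := S.exists_mem_eq_inf' hSne ℓ
    rw [hm, hpe]; exact hℓ p ((hmem p).1 hp)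
  have hle : ∀ p ∈ S, m ≤ ℓ p := fun p hp => Finset.inf'_le ℓ hp
  have hge : ∀ p ∈ S, ℓ p ≤ M := fun p hp => Finset.le_sup' ℓ hp
  have hmM : m ≤ M := by
    obtain ⟨p, hp⟩ := id hSne
    exact (hle p hp).trans (hge p hp)
  -- restrict sums to S
  have hsumS : ∑ p ∈ S, f p = r := by
    rw [← hsum]
    apply Finset.sum_subset (Finset.subset_univ S)
    intro p _ hp
    have h0 : ¬ 0 < f p := fun h => hp ((hmem p).2 h)
    linarith [hf p]
  have hsumℓ : ∑ p, f p * ℓ p = ∑ p ∈ S, f p * ℓ p := by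
    symm
    apply Finset.sum_subset (Finset.subset_univ S)
    intro p _ hp
    have h0 : ¬ 0 < f p := fun h => hp ((hmem p).2 h)
    have : f p = 0 := le_antisymm (not_lt.1 h0) (hf p)
    simp [this]
  have hlow : r * m ≤ ∑ p, f p * ℓ p := by
    rw [hsumℓ, ← hsumS, Finset.sum_mul]
    exact Finset.sum_le_sum fun p hp =>
      mul_le_mul_of_nonneg_left (hle p hp) (hf p)
  have hhigh : ∑ p, f p * ℓ p ≤ r * M := by
    rw [hsumℓ, ← hsumS, Finset.sum_mul]
    exact Finset.sum_le_sum fun p hp =>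
      mul_le_mul_of_nonneg_left (hge p hp) (hf p)
  have hrm : 0 < r * m := mul_pos hr hmpos
  by_cases hc : ∀ p ∈ S, ∀ q ∈ S, ℓ p = ℓ q
  · -- constant case
    obtain ⟨p0, hp0⟩ := id hSne
    have hm0 : m = ℓ p0 := by
      obtain ⟨p, hp, hpe⟩ := S.exists_mem_eq_inf' hSne ℓ
      rw [hm, hpe]; exact hc p hp p0 hp0
    have hM0 : M = ℓ p0 := by
      obtain ⟨p, hp, hpe⟩ := S.exists_mem_eq_sup' hSne ℓ
      rw [hM, hpe]; exact hc p hp p0 hp0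
    have hℓp0 : 0 < ℓ p0 := hℓ p0 ((hmem p0).1 hp0)
    have hsum0 : ∑ p, f p * ℓ p = r * ℓ p0 := by
      rw [hsumℓ, ← hsumS, Finset.sum_mul]
      exact Finset.sum_congr rfl fun p hp => by rw [hc p hp p0 hp0]
    have h1 : (∑ p, f p * ℓ p) / (r * m) = 1 := by
      rw [hsum0, hm0]; exact div_self (mul_pos hr hℓp0).ne'
    have h2 : M / m = 1 := by
      rw [hM0, hm0]; exact div_self hℓp0.ne'
    exact ⟨Or.inr ⟨by rw [h1, h2], h1⟩, iff_of_true (by rw [h1, h2]) hc⟩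
  · -- non-constant case
    push_neg at hc
    obtain ⟨p, hp, q, hq, hpq⟩ := hc
    have hmM' : m < M := by
      rcases lt_or_eq_of_le hmM with h | h
      · exact h
      · exfalso
        apply hpq
        have e1 := le_antisymm (hge p hp) (h ▸ hle p hp)
        have e2 := le_antisymm (hge q hq) (h ▸ hle q hq)
        rw [e1, e2]
    obtain ⟨pm, hpm, hpme⟩ := S.exists_mem_eq_inf' hSne ℓ
    obtain ⟨pM, hpM, hpMe⟩ := S.exists_mem_eq_sup' hSne ℓ
    have hlow' : r * m < ∑ p, f p * ℓ p := by
      rw [hsumℓ, ← hsumS, Finset.sum_mul]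
      apply Finset.sum_lt_sum
        (fun p hp => mul_le_mul_of_nonneg_left (hle p hp) (hf p))
      exact ⟨pM, hpM, by
        apply mul_lt_mul_of_pos_left _ ((hmem pM).1 hpM)
        rw [← hpMe]; exact hmM'⟩
    have hhigh' : ∑ p, f p * ℓ p < r * M := by
      rw [hsumℓ, ← hsumS, Finset.sum_mul]
      apply Finset.sum_lt_sum
        (fun p hp => mul_le_mul_of_nonneg_left (hge p hp) (hf p))
      exact ⟨pm, hpm, by
        apply mul_lt_mul_of_pos_left _ ((hmem pm).1 hpm)
        rw [← hpme]; exact hmM'⟩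
    have hA1 : (∑ p, f p * ℓ p) / (r * m) > 1 := by
      rw [gt_iff_lt, lt_div_iff₀ hrm, one_mul]; exact hlow'
    have hLA : M / m > (∑ p, f p * ℓ p) / (r * m) := by
      rw [gt_iff_lt, div_lt_div_iff₀ hrm hmpos]
      calc (∑ p, f p * ℓ p) * m < r * M * m :=
            mul_lt_mul_of_pos_right hhigh' hmpos
        _ = M * (r * m) := by ring
    refine ⟨Or.inl ⟨hLA, hA1⟩, iff_of_false (fun h => absurd h.symm (ne_of_gt hLA)) ?_⟩
    push_neg
    exact ⟨p, hp, q, hq, hpq⟩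
end

section
/- Fix n ≥ 1. For ε ∈ (0, n+1), let x*(ε) = (ε/(n+1))^{1/n} and define the average unfairness of the optimal Pigou flow as U^A(ε) = (x*(ε)^{n+1} + (1−x*(ε))·ε) / ((x*(ε))^n) where (x*(ε))^n = ε/(n+1) is the minimum used latency. Then U^A(ε) → n+1 as ε → 0⁺. -/
/-!
Writing `x = (ε / (n + 1)) ^ (1 / n)`, so that `x ^ n = ε / (n + 1)`, the average unfairness
simplifies exactly to `x + (n + 1) (1 - x)`, and `x → 0` as `ε → 0⁺`.
-/

open Filter Topology

lemma pigou_cost_div_min_latency {n : ℕ} {x ε c : ℝ} (hε : ε ≠ 0) (hc : c ≠ 0)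
    (hx : x ^ n = ε / c) :
    (x ^ (n + 1) + (1 - x) * ε) / (ε / c) = x + c * (1 - x) := by
  rw [pow_succ, hx]
  field_simp

lemma tendsto_div_const_rpow_nhds_zero (c : ℝ) {p : ℝ} (hp : 0 < p) :
    Tendsto (fun ε : ℝ => (ε / c) ^ p) (𝓝 0) (𝓝 0) := by
  have hcont : Continuous fun ε : ℝ => (ε / c) ^ p :=
    (continuous_id.div_const c).rpow_const fun _ => Or.inr hp.le
  simpa [Real.zero_rpow hp.ne'] using hcont.tendsto 0

/-- Average unfairness of the optimal Pigou flow tends to n+1 as ε → 0⁺. -/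
theorem stmt_6 (n : ℕ) (hn : 1 ≤ n) :
    Filter.Tendsto
      (fun ε : ℝ =>
        (((ε / ((n : ℝ) + 1)) ^ ((n : ℝ)⁻¹)) ^ (n + 1) +
            (1 - (ε / ((n : ℝ) + 1)) ^ ((n : ℝ)⁻¹)) * ε) / (ε / ((n : ℝ) + 1)))
      (nhdsWithin 0 (Set.Ioi 0)) (nhds ((n : ℝ) + 1)) := by
  have hn₀ : n ≠ 0 := Nat.one_le_iff_ne_zero.mp hn
  have hc : (n : ℝ) + 1 ≠ 0 := by positivity
  have hx : Tendsto (fun ε : ℝ => (ε / ((n : ℝ) + 1)) ^ ((n : ℝ)⁻¹)) (𝓝[>] 0) (𝓝 0) :=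
    (tendsto_div_const_rpow_nhds_zero _ (by positivity)).mono_left nhdsWithin_le_nhds
  have hlim := hx.add ((tendsto_const_nhds (x := (1 : ℝ)) |>.sub hx).const_mul ((n : ℝ) + 1))
  simp only [zero_add, sub_zero, mul_one] at hlim
  refine hlim.congr' ?_
  filter_upwards [self_mem_nhdsWithin] with ε (hε : 0 < ε)
  rw [pigou_cost_div_min_latency hε.ne' hc
    (Real.rpow_inv_natCast_pow (div_pos hε (by positivity)).le hn₀)]
end

section
/- Fix n ≥ 1 and ε ∈ (0,1). In the Pigou network with unit demand, latencies x^n and constant c = (n+1)(1−ε), the optimal flow routes x* = (1−ε)^{1/n} on the polynomial edge, and the average unfairness of the optimal flow equals (n+1) − n(1−ε)^{1/n}, which tends to 1 as ε → 0⁺. -/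
/-!
The Pigou cost `x ^ (n + 1) + (1 - x) * c` is convex in `x`, and when `c = (n + 1) * a ^ n` its
derivative vanishes at `a`; Bernoulli's inequality is exactly the resulting tangent-line bound.
Taking `a = (1 - ε) ^ (1 / n)` gives `c = (n + 1) * (1 - ε)`, and dividing the optimal cost by
the latency `a ^ n` of the polynomial edge leaves `a + (n + 1) * (1 - a)`.
-/

section PigouCost

variable {R : Type*} [CommRing R] [LinearOrder R] [IsStrictOrderedRing R]

lemma pow_succ_add_mul_sub_le_pow_succ {a x : R} (h : 0 ≤ a + x) (ha : 0 ≤ a) (n : ℕ) :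
    a ^ (n + 1) + (n + 1) * a ^ n * (x - a) ≤ x ^ (n + 1) := by
  simpa using pow_add_mul_le_add_pow (b := x - a) ha (by linarith) (n + 1)

lemma pigou_cost_le {a x : R} (h : 0 ≤ a + x) (ha : 0 ≤ a) (n : ℕ) :
    a ^ (n + 1) + (1 - a) * ((n + 1) * a ^ n) ≤ x ^ (n + 1) + (1 - x) * ((n + 1) * a ^ n) := by
  linarith [pow_succ_add_mul_sub_le_pow_succ h ha n]

end PigouCost

lemma pigou_cost_div_pow {K : Type*} [Field K] {a : K} (ha : a ≠ 0) (n : ℕ) :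
    (a ^ (n + 1) + (1 - a) * ((n + 1) * a ^ n)) / a ^ n = (n + 1) - n * a := by
  field_simp
  ring

lemma tendsto_sub_mul_one_sub_rpow (n : ℕ) (p : ℝ) :
    Filter.Tendsto (fun ε : ℝ => ((n : ℝ) + 1) - n * (1 - ε) ^ p) (nhdsWithin 0 (Set.Ioi 0))
      (nhds 1) := by
  have hcont : ContinuousAt (fun ε : ℝ => ((n : ℝ) + 1) - n * (1 - ε) ^ p) 0 :=
    continuousAt_const.sub <| continuousAt_const.mul <|
      (continuousAt_const.sub continuousAt_id).rpow_const (Or.inl (by norm_num))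
  simpa using hcont.tendsto.mono_left nhdsWithin_le_nhds

/-- Pigou network with constant edge (n+1)(1-ε): optimal flow routes (1-ε)^{1/n} on the
polynomial edge, its average unfairness equals (n+1) - n(1-ε)^{1/n}, which tends to 1. -/
theorem stmt_7 (n : ℕ) (hn : 1 ≤ n) :
    (∀ ε ∈ Set.Ioo (0:ℝ) 1,
      (∀ x ∈ Set.Icc (0:ℝ) 1,
        ((1 - ε) ^ ((n : ℝ)⁻¹)) ^ (n + 1) +
            (1 - (1 - ε) ^ ((n : ℝ)⁻¹)) * (((n : ℝ) + 1) * (1 - ε)) ≤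
          x ^ (n + 1) + (1 - x) * (((n : ℝ) + 1) * (1 - ε))) ∧
      (((1 - ε) ^ ((n : ℝ)⁻¹)) ^ (n + 1) +
            (1 - (1 - ε) ^ ((n : ℝ)⁻¹)) * (((n : ℝ) + 1) * (1 - ε))) /
          (((1 - ε) ^ ((n : ℝ)⁻¹)) ^ n) =
        ((n : ℝ) + 1) - (n : ℝ) * (1 - ε) ^ ((n : ℝ)⁻¹)) ∧
    Filter.Tendsto (fun ε : ℝ => ((n : ℝ) + 1) - (n : ℝ) * (1 - ε) ^ ((n : ℝ)⁻¹))
      (nhdsWithin 0 (Set.Ioi 0)) (nhds 1) := by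
  refine ⟨fun ε hε => ?_, tendsto_sub_mul_one_sub_rpow n _⟩
  have hpos : 0 < 1 - ε := sub_pos.2 hε.2
  set a := (1 - ε) ^ ((n : ℝ)⁻¹)
  have ha : 0 < a := Real.rpow_pos_of_pos hpos _
  have han : a ^ n = 1 - ε := Real.rpow_inv_natCast_pow hpos.le (by omega)
  rw [← han]
  exact ⟨fun x hx => pigou_cost_le (by linarith [hx.1]) ha.le n, pigou_cost_div_pow ha.ne' n⟩
end

section
/- In the Braess network with demand 3/4 (paths and latencies as above), for sufficiently small β > 0, the flow g = (3/8, 0, 3/8) uniquely minimizes total cost among nonnegative flows (f₁,f₂,f₃) with f₁+f₂+f₃ = 3/4 satisfying the loaded-unfairness constraint max{ℓ_P(f): f_P>0} ≤ (1+β)·min{ℓ_P(f): f_P>0}; its cost is 2·(3/8)·(3/8+1) = 33/32, and its loaded unfairness equals 1. -/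
/-- In the Braess network with demand 3/4, for sufficiently small β > 0 the flow
(3/8, 0, 3/8) uniquely minimizes cost under the loaded-unfairness constraint;
it costs 33/32 and has loaded unfairness 1. -/
theorem stmt_14 :
    ∃ β₀ > (0 : ℝ), ∀ β : ℝ, 0 < β → β < β₀ →
      (let L : (Fin 3 → ℝ) → Fin 3 → ℝ :=
        fun f => ![(f 0 + f 1) + 1, (f 0 + f 1) + (f 1 + f 2), 1 + (f 1 + f 2)]
      let C : (Fin 3 → ℝ) → ℝ := fun f => ∑ p, f p * L f p
      let g : Fin 3 → ℝ := ![3/8, 0, 3/8]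
      C g = 33/32 ∧
      (∀ p q, 0 < g p → 0 < g q → L g p = L g q) ∧
      (∀ p q, 0 < g p → 0 < g q → L g p ≤ (1 + β) * L g q) ∧
      ∀ f : Fin 3 → ℝ, (∀ i, 0 ≤ f i) → (∑ i, f i = 3/4) →
        (∀ p q, 0 < f p → 0 < f q → L f p ≤ (1 + β) * L f q) →
        f ≠ g → C g < C f) := by
  refine ⟨1/6, by norm_num, fun β hβ hβ' => ?_⟩
  intro L C g
  have hCf : ∀ f : Fin 3 → ℝ, C f =
      f 0 * ((f 0 + f 1) + 1) + f 1 * ((f 0 + f 1) + (f 1 + f 2))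
        + f 2 * (1 + (f 1 + f 2)) := by
    intro f
    show (∑ p, f p * ![(f 0 + f 1) + 1, (f 0 + f 1) + (f 1 + f 2),
      1 + (f 1 + f 2)] p) = _
    simp [Fin.sum_univ_three]
  have hg0 : g 0 = 3/8 := rfl
  have hg1 : g 1 = 0 := rfl
  have hg2 : g 2 = 3/8 := rfl
  have hCg : C g = 33/32 := by rw [hCf, hg0, hg1, hg2]; norm_num
  have hLg : ∀ p : Fin 3, 0 < g p → L g p = 11/8 := by
    intro p hp
    fin_cases p
    · show (3:ℝ)/8 + 0 + 1 = 11/8; norm_num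
    · exact ((lt_irrefl (0:ℝ)) (by exact hp)).elim
    · show (1:ℝ) + (0 + 3/8) = 11/8; norm_num
  refine ⟨hCg, fun p q hp hq => by rw [hLg p hp, hLg q hq],
    fun p q hp hq => by rw [hLg p hp, hLg q hq]; nlinarith, ?_⟩
  intro f hf hsum hfair hne
  rw [hCg, hCf]
  have h0 := hf 0
  have h1 := hf 1
  have h2 := hf 2
  have hs : f 0 + f 1 + f 2 = 3/4 := by
    simpa [Fin.sum_univ_three] using hsum
  by_cases hf1 : f 1 = 0
  · -- f 1 = 0 : cost is f0² + f2² + 3/4, uniquely minimized at f0 = f2 = 3/8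
    have hne' : f 0 ≠ 3/8 ∨ f 2 ≠ 3/8 := by
      by_contra h
      push_neg at h
      exact hne (funext fun i => by
        fin_cases i
        · exact h.1.trans hg0.symm
        · exact hf1.trans hg1.symm
        · exact h.2.trans hg2.symm)
    have hd : f 0 ≠ f 2 := by
      rcases hne' with h | h <;> intro he <;> apply h <;> nlinarith
    have : (f 0 - f 2)^2 > 0 :=
      lt_of_le_of_ne (sq_nonneg _)
        (Ne.symm (pow_ne_zero 2 (sub_ne_zero.mpr hd)))
    nlinarith
  · have hf1' : 0 < f 1 := lt_of_le_of_ne h1 (Ne.symm hf1)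
    by_cases hf0 : f 0 = 0
    · by_cases hf2 : f 2 = 0
      · -- f = (0, 3/4, 0), cost 9/8
        have : f 1 = 3/4 := by rw [hf0, hf2] at hs; linarith
        rw [hf0, hf2, this]; norm_num
      · -- f 2 > 0, f 1 > 0: fairness between paths 2 and 1 fails
        have hf2' : 0 < f 2 := lt_of_le_of_ne h2 (Ne.symm hf2)
        have := hfair 2 1 hf2' hf1'
        have hle : (1 : ℝ) + (f 1 + f 2) ≤
            (1 + β) * ((f 0 + f 1) + (f 1 + f 2)) := this
        nlinarith
    · -- f 0 > 0, f 1 > 0: fairness between paths 0 and 1 fails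
      have hf0' : 0 < f 0 := lt_of_le_of_ne h0 (Ne.symm hf0)
      have := hfair 0 1 hf0' hf1'
      have hle : (f 0 + f 1) + 1 ≤
          (1 + β) * ((f 0 + f 1) + (f 1 + f 2)) := this
      nlinarith
end

section
/- Let P be a finite path set indexed over a single commodity, f* an optimal flow (minimizing total cost) and f^NE a Nash flow for the same instance, with all latencies of used paths positive. Then min{ℓ_P(f*) : f*_P > 0} ≤ max{ℓ_P(f^NE) : f^NE_P > 0}. Consequently the loaded unfairness of f* is at least its UE unfairness: max{ℓ_P(f*): f*_P>0}/min{ℓ_P(f*): f*_P>0} ≥ max{ℓ_P(f*): f*_P>0}/ℓ_Q(f^NE) for any Q used by f^NE. -/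
/-- The minimum used latency of an optimal flow is at most the maximum used Nash latency;
hence loaded unfairness of the optimal flow dominates its UE unfairness. -/
theorem stmt_15 {P : Type*} [Fintype P] (r : ℝ) (hr : 0 < r)
    (ℓ : (P → ℝ) → P → ℝ) (fstar fNE : P → ℝ)
    (hfs : ∀ p, 0 ≤ fstar p) (hsum1 : ∑ p, fstar p = r)
    (hfn : ∀ p, 0 ≤ fNE p) (hsum2 : ∑ p, fNE p = r)
    (hpos : ∀ p, 0 < fstar p → 0 < ℓ fstar p)
    (hposNE : ∀ p, 0 < fNE p → 0 < ℓ fNE p)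
    (hopt : ∀ g : P → ℝ, (∀ p, 0 ≤ g p) → (∑ p, g p = r) →
      ∑ p, fstar p * ℓ fstar p ≤ ∑ p, g p * ℓ g p)
    (hnash : ∀ p q, 0 < fNE p → ℓ fNE p ≤ ℓ fNE q) :
    sInf {y : ℝ | ∃ p, 0 < fstar p ∧ y = ℓ fstar p} ≤
      sSup {y : ℝ | ∃ p, 0 < fNE p ∧ y = ℓ fNE p} ∧
    ∀ q, 0 < fNE q →
      sSup {y : ℝ | ∃ p, 0 < fstar p ∧ y = ℓ fstar p} / ℓ fNE q ≤
        sSup {y : ℝ | ∃ p, 0 < fstar p ∧ y = ℓ fstar p} /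
          sInf {y : ℝ | ∃ p, 0 < fstar p ∧ y = ℓ fstar p} := by
  set S : Set ℝ := {y : ℝ | ∃ p, 0 < fstar p ∧ y = ℓ fstar p} with hS
  set T : Set ℝ := {y : ℝ | ∃ p, 0 < fNE p ∧ y = ℓ fNE p} with hT
  -- finiteness
  have hSfin : S.Finite := by
    have : S ⊆ Set.range (ℓ fstar) := by rintro y ⟨p, _, rfl⟩; exact ⟨p, rfl⟩
    exact (Set.finite_range _).subset this
  have hTfin : T.Finite := by
    have : T ⊆ Set.range (ℓ fNE) := by rintro y ⟨p, _, rfl⟩; exact ⟨p, rfl⟩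
    exact (Set.finite_range _).subset this
  -- nonemptiness
  have hex : ∀ (f : P → ℝ), (∀ p, 0 ≤ f p) → (∑ p, f p = r) → ∃ p, 0 < f p := by
    intro f hf hsum
    by_contra h
    push_neg at h
    have : ∑ p, f p = 0 := Finset.sum_eq_zero (fun p _ => le_antisymm (h p) (hf p))
    rw [hsum] at this; linarith
  obtain ⟨p0, hp0⟩ := hex fstar hfs hsum1
  obtain ⟨q0, hq0⟩ := hex fNE hfn hsum2
  have hSne : S.Nonempty := ⟨ℓ fstar p0, p0, hp0, rfl⟩
  have hTne : T.Nonempty := ⟨ℓ fNE q0, q0, hq0, rfl⟩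
  set L : ℝ := ℓ fNE q0 with hL
  -- all used Nash paths have latency L
  have hNEeq : ∀ q, 0 < fNE q → ℓ fNE q = L :=
    fun q hq => le_antisymm (hnash q q0 hq) (hnash q0 q hq0)
  -- Nash cost:
  have hCNE : ∑ p, fNE p * ℓ fNE p = r * L := by
    rw [← hsum2, Finset.sum_mul]
    apply Finset.sum_congr rfl
    intro p _
    rcases lt_or_eq_of_le (hfn p) with h | h
    · rw [hNEeq p h]
    · rw [← h]; ring
  -- key claim: some used optimal path has latency ≤ L
  have hkey : ∃ p, 0 < fstar p ∧ ℓ fstar p ≤ L := by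
    by_contra h
    push_neg at h
    have hge : ∀ p ∈ Finset.univ, fstar p * L ≤ fstar p * ℓ fstar p := by
      intro p _
      rcases lt_or_eq_of_le (hfs p) with hp | hp
      · exact le_of_lt (mul_lt_mul_of_pos_left (h p hp) hp)
      · rw [← hp]; simp
    have hlt : ∑ p, fstar p * L < ∑ p, fstar p * ℓ fstar p := by
      apply Finset.sum_lt_sum hge
      exact ⟨p0, Finset.mem_univ _, mul_lt_mul_of_pos_left (h p0 hp0) hp0⟩
    have : ∑ p, fstar p * L = r * L := by rw [← Finset.sum_mul, hsum1]
    have hle := hopt fNE hfn hsum2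
    rw [hCNE] at hle
    linarith
  obtain ⟨p1, hp1, hp1L⟩ := hkey
  have hbddS : BddBelow S := hSfin.bddBelow
  have hbddS' : BddAbove S := hSfin.bddAbove
  have hbddT : BddAbove T := hTfin.bddAbove
  have hInfle : sInf S ≤ L := le_trans (csInf_le hbddS ⟨p1, hp1, rfl⟩) hp1L
  have hLmem : L ∈ T := ⟨q0, hq0, rfl⟩
  have hInfpos : 0 < sInf S := by
    obtain ⟨p, hp, hpe⟩ := hSne.csInf_mem hSfin
    rw [hpe]; exact hpos p hp
  have hSuppos : 0 < sSup S := by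
    obtain ⟨p, hp, hpe⟩ := hSne.csSup_mem hSfin
    rw [hpe]; exact hpos p hp
  refine ⟨le_trans hInfle (le_csSup hbddT hLmem), ?_⟩
  intro q hq
  rw [hNEeq q hq]
  exact div_le_div_of_nonneg_left (le_of_lt hSuppos) hInfpos hInfle
end

section
/- Consider the two-commodity network: commodity 1 with demand 1/4 from s₁ to t, commodity 2 with demand 3/4 from s₂ to t; edges: s₁→t with constant latency 3/2, s₁→s₂ with latency 0, s₂→t with latency equal to its flow x. The flow routing all of commodity 1 directly on s₁→t and all of commodity 2 on s₂→t minimizes total cost over all feasible flows (cost = (1/4)(3/2) + (3/4)² = 15/16), while the Nash flow routes commodity 1 through s₁→s₂→t (Nash latency of commodity 1's used path is 1 < 3/2). Hence the UE unfairness of the optimal flow for commodity 1 equals (3/2)/1 = 3/2 while its loaded unfairness is 1. -/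
/-- Two-commodity instance: routing commodity 1 directly and commodity 2 on its path is
optimal with cost 15/16; the Nash route of commodity 1 has latency 1 < 3/2, so the UE
unfairness of the optimal flow is (3/2)/1 = 3/2 while its loaded unfairness is 1. -/
theorem stmt_16 :
    (∀ fA fB : ℝ, 0 ≤ fA → 0 ≤ fB → fA + fB = 1/4 →
      (1/4 : ℝ) * (3/2) + (3/4) * (3/4) ≤
        fA * (3/2) + fB * (fB + 3/4) + (3/4) * (fB + 3/4)) ∧
    ((1/4 : ℝ) * (3/2) + (3/4) * (3/4) = 15/16) ∧
    ((1/4 : ℝ) + 3/4 < 3/2) ∧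
    ((3/2 : ℝ) / ((1/4 : ℝ) + 3/4) = 3/2) ∧
    ((3/2 : ℝ) / (3/2) = 1) := by
  refine ⟨?_, by norm_num, by norm_num, by norm_num, by norm_num⟩
  intro fA fB hA hB hsum
  have hA' : fA = 1/4 - fB := by linarith
  subst hA'
  nlinarith [sq_nonneg fB]
end

section
/- Let ℓ be differentiable, nondecreasing, nonnegative with marginal cost ℓ̂(x) = ℓ(x) + x ℓ'(x), and suppose ℓ̂(ε) ≥ γ·ℓ(ε) > 0 for some ε > 0 and γ > 1. Consider the Pigou-type network with demand r > ε: one edge with constant latency ℓ̂(ε), one edge with latency ℓ. The flow routing ε on the ℓ-edge and r−ε on the constant edge has average unfairness (ε ℓ(ε) + ℓ̂(ε)(r−ε))/(r ℓ(ε)) ≥ ε/r + (1−ε/r)γ, which tends to γ as r → ∞. -/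
/-!
After clearing the denominator `r ℓ(ε)`, the bound only says that each of the `r - ε` units on
the constant edge pays `ℓ̂(ε) ≥ γ ℓ(ε)`. The lower bound is the convex combination of `1` and `γ`
with weight `1 - ε/r → 1` on `γ`.
-/

open Filter Topology

theorem div_add_one_sub_div_mul_le_div {a c ε γ r : ℝ} (ha : 0 < a) (hc : γ * a ≤ c)
    (hr : 0 < r) (hεr : ε ≤ r) :
    ε / r + (1 - ε / r) * γ ≤ (ε * a + c * (r - ε)) / (r * a) := by
  have hlhs : ε / r + (1 - ε / r) * γ = (ε * a + γ * a * (r - ε)) / (r * a) := by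
    field_simp
  rw [hlhs]
  gcongr

theorem tendsto_div_add_one_sub_div_mul_atTop (ε γ : ℝ) :
    Tendsto (fun r : ℝ => ε / r + (1 - ε / r) * γ) atTop (𝓝 γ) := by
  have h : Tendsto (fun r : ℝ => ε / r) atTop (𝓝 0) :=
    tendsto_const_nhds.div_atTop tendsto_id
  simpa using h.add (((tendsto_const_nhds (x := (1 : ℝ))).sub h).mul tendsto_const_nhds)

theorem stmt_17_general (ℓ : ℝ → ℝ) (ε γ : ℝ) (hε : 0 < ε)
    (hpos : 0 < ℓ ε) (hsteep : γ * ℓ ε ≤ ℓ ε + ε * deriv ℓ ε) :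
    (∀ r : ℝ, ε < r →
      ε / r + (1 - ε / r) * γ ≤
        (ε * ℓ ε + (ℓ ε + ε * deriv ℓ ε) * (r - ε)) / (r * ℓ ε)) ∧
    Filter.Tendsto (fun r : ℝ => ε / r + (1 - ε / r) * γ) Filter.atTop (nhds γ) :=
  ⟨fun _ hr => div_add_one_sub_div_mul_le_div hpos hsteep (hε.trans hr) hr.le,
    tendsto_div_add_one_sub_div_mul_atTop ε γ⟩

/-- Lower-bound construction: in the Pigou-type network with edges ℓ and constant ℓ̂(ε),
the optimal flow's average unfairness is at least ε/r + (1 - ε/r)γ, which tends to γ. -/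
theorem stmt_17 (ℓ : ℝ → ℝ) (hdiff : Differentiable ℝ ℓ) (hmono : Monotone ℓ)
    (hnn : ∀ x : ℝ, 0 ≤ x → 0 ≤ ℓ x) (ε γ : ℝ) (hε : 0 < ε) (hγ : 1 < γ)
    (hpos : 0 < ℓ ε) (hsteep : γ * ℓ ε ≤ ℓ ε + ε * deriv ℓ ε) :
    (∀ r : ℝ, ε < r →
      ε / r + (1 - ε / r) * γ ≤
        (ε * ℓ ε + (ℓ ε + ε * deriv ℓ ε) * (r - ε)) / (r * ℓ ε)) ∧
    Filter.Tendsto (fun r : ℝ => ε / r + (1 - ε / r) * γ) Filter.atTop (nhds γ) :=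
  stmt_17_general ℓ ε γ hε hpos hsteep
end
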